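/- Let A be a right ideal of a ring R with a serial factorization A = A_1⋯A_n. Then: (1) every right ideal A_i is contained in a unique maximal right ideal M_i of R; (2) the maximal right ideals M_1, …, M_n are pairwise distinct, and a maximal right ideal M of R contains A if and only if M = M_i for some i; (3) if n ≥ 2, then each M_i is a two-sided ideal of R and is also a maximal left ideal of R. -/

import Mathlib

/-!
Since `R/Aᵢ` is uniserial, the right ideals containing `Aᵢ` form a chain, so the maximal right
ideal `Mᵢ` above `Aᵢ` is unique and contains every proper right ideal above `Aᵢ`. Coindependence
gives `Aᵢ + Aⱼ = R` for `i ≠ j`, which separates the `Mᵢ`, and a maximal right ideal containing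
the product `A₁⋯Aₙ` has to contain one of the factors. For `n ≥ 2`, writing `1 = a + b` with
`a ∈ Aᵢ`, `b ∈ Aⱼ` and using `AⱼAᵢ = AᵢAⱼ ⊆ Aᵢ` shows that `Aᵢ` is two-sided; then `R/Aᵢ` is a ring
whose non-units (on the right) form the right ideal `Mᵢ/Aᵢ`, i.e. a local ring, so `Mᵢ` is
two-sided and `R/Mᵢ` is a division ring, which makes `Mᵢ` a maximal left ideal too.
-/

open MulOpposite

universe u

/-- The product `A·B` of two right ideals of `R` (right ideals are `Rᵐᵒᵖ`-submodules of `R`):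
the set of all finite sums of products `a * b` with `a ∈ A`, `b ∈ B`. -/
def rmul {R : Type u} [Ring R] (A B : Submodule Rᵐᵒᵖ R) : Submodule Rᵐᵒᵖ R :=
  Submodule.span Rᵐᵒᵖ {x : R | ∃ a ∈ A, ∃ b ∈ B, x = a * b}

/-- The product `A₁⋯Aₙ` of a (possibly empty) list of right ideals. -/
def rprod {R : Type u} [Ring R] : List (Submodule Rᵐᵒᵖ R) → Submodule Rᵐᵒᵖ R
  | [] => ⊤
  | [A] => A
  | A :: l => rmul A (rprod l)

/-- A finite family of right ideals is coindependent if `Aᵢ + ⋂_{j ≠ i} Aⱼ = R` for every `i`. -/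
def Coindep {R : Type u} [Ring R] {n : ℕ} (A : Fin n → Submodule Rᵐᵒᵖ R) : Prop :=
  ∀ i, A i ⊔ (⨅ j, ⨅ (_ : j ≠ i), A j) = ⊤

/-- A module is uniserial if its submodules are linearly ordered by inclusion. -/
def IsUniserialMod (S : Type*) [Ring S] (M : Type*) [AddCommGroup M] [Module S M] : Prop :=
  ∀ N P : Submodule S M, N ≤ P ∨ P ≤ N

/-- A right ideal is a two-sided ideal if it is also closed under left multiplication. -/
def IsTwoSidedRid {R : Type u} [Ring R] (A : Submodule Rᵐᵒᵖ R) : Prop :=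
  ∀ (r : R), ∀ x ∈ A, r * x ∈ A

/-- A serial factorization of a right ideal `A`: a factorization `A = A₁⋯Aₙ` into proper
right ideals that pairwise commute, form a coindependent family, and are such that every
quotient `R/Aᵢ` is a uniserial right `R`-module. -/
def IsSerialFact {R : Type u} [Ring R] {n : ℕ} (A : Submodule Rᵐᵒᵖ R)
    (F : Fin n → Submodule Rᵐᵒᵖ R) : Prop :=
  (∀ i, F i ≠ ⊤) ∧ (∀ i j, rmul (F i) (F j) = rmul (F j) (F i)) ∧ Coindep F ∧
    (∀ i, IsUniserialMod Rᵐᵒᵖ (R ⧸ F i)) ∧ A = rprod (List.ofFn F)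

/-- A right ideal has a serial factorization if it admits one of some length. -/
def HasSerialFact {R : Type u} [Ring R] (A : Submodule Rᵐᵒᵖ R) : Prop :=
  ∃ (n : ℕ) (F : Fin n → Submodule Rᵐᵒᵖ R), IsSerialFact A F

/-- A right chain ring: its right ideals are linearly ordered by inclusion. -/
def IsRightChainRing (R : Type u) [Ring R] : Prop :=
  ∀ A B : Submodule Rᵐᵒᵖ R, A ≤ B ∨ B ≤ A

/-- A ring is right duo if every right ideal is a two-sided ideal. -/
def IsRightDuo (R : Type u) [Ring R] : Prop :=
  ∀ A : Submodule Rᵐᵒᵖ R, IsTwoSidedRid A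

/-- The principal right ideal `rR`. -/
def rspan {R : Type u} [Ring R] (r : R) : Submodule Rᵐᵒᵖ R :=
  Submodule.span Rᵐᵒᵖ ({r} : Set R)

section Order

variable {α : Type*} [PartialOrder α] [OrderTop α] {a m x : α}

theorem IsChain.le_of_isCoatom (hc : IsChain (· ≤ ·) (Set.Ici a)) (hm : IsCoatom m)
    (ham : a ≤ m) (hax : a ≤ x) (hx : x ≠ ⊤) : x ≤ m := by
  rcases hc.total (Set.mem_Ici.2 hax) (Set.mem_Ici.2 ham) with h | h
  · exact h
  · exact ((hm.le_iff.1 h).resolve_left hx).le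

theorem IsChain.eq_of_isCoatom (hc : IsChain (· ≤ ·) (Set.Ici a)) (hm : IsCoatom m)
    (ham : a ≤ m) (hx : IsCoatom x) (hax : a ≤ x) : x = m :=
  (((hx.le_iff.1 (hc.le_of_isCoatom hm ham hax hx.1)).resolve_left hm.1)).symm

end Order

theorem isChain_Ici_of_isUniserialMod {S M : Type*} [Ring S] [AddCommGroup M] [Module S M]
    {p : Submodule S M} (h : IsUniserialMod S (M ⧸ p)) : IsChain (· ≤ ·) (Set.Ici p) := by
  intro N hN P hP _
  let e := (Submodule.comapMkQRelIso p).symm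
  exact (h (e ⟨N, hN⟩) (e ⟨P, hP⟩)).imp e.le_iff_le.1 e.le_iff_le.1

namespace RightIdeal

variable {R : Type u} [Ring R]

theorem mul_mem_right (N : Submodule Rᵐᵒᵖ R) {x : R} (hx : x ∈ N) (r : R) : x * r ∈ N :=
  N.smul_mem (op r) hx

theorem eq_top_of_one_mem {N : Submodule Rᵐᵒᵖ R} (h : (1 : R) ∈ N) : N = ⊤ :=
  Submodule.eq_top_iff'.2 fun x => by simpa using mul_mem_right N h x

instance moduleFinite : Module.Finite Rᵐᵒᵖ R :=
  ⟨⟨{1}, by ext x; simpa using Submodule.mem_span_singleton.2 ⟨op x, by simp⟩⟩⟩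

theorem exists_isCoatom_ge {N : Submodule Rᵐᵒᵖ R} (h : N ≠ ⊤) :
    ∃ M : Submodule Rᵐᵒᵖ R, IsCoatom M ∧ N ≤ M :=
  (eq_top_or_exists_le_coatom N).resolve_left h

end RightIdeal

open RightIdeal

section RightIdeals

variable {R : Type u} [Ring R]

theorem mul_mem_rmul {A B : Submodule Rᵐᵒᵖ R} {a b : R} (ha : a ∈ A) (hb : b ∈ B) :
    a * b ∈ rmul A B :=
  Submodule.subset_span ⟨a, ha, b, hb, rfl⟩

theorem rmul_le {A B C : Submodule Rᵐᵒᵖ R} (h : ∀ a ∈ A, ∀ b ∈ B, a * b ∈ C) :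
    rmul A B ≤ C := by
  rw [rmul, Submodule.span_le]
  rintro x ⟨a, ha, b, hb, rfl⟩
  exact h a ha b hb

theorem rmul_le_left (A B : Submodule Rᵐᵒᵖ R) : rmul A B ≤ A :=
  rmul_le fun _ ha b _ => mul_mem_right A ha b

theorem rmul_mono_right {A B C : Submodule Rᵐᵒᵖ R} (h : B ≤ C) : rmul A B ≤ rmul A C :=
  rmul_le fun _ ha _ hb => mul_mem_rmul ha (h hb)

theorem rmul_top (A : Submodule Rᵐᵒᵖ R) : rmul A ⊤ = A :=
  le_antisymm (rmul_le_left _ _) fun a ha => by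
    simpa using mul_mem_rmul ha (Submodule.mem_top (x := (1 : R)))

theorem rprod_cons (A : Submodule Rᵐᵒᵖ R) (l : List (Submodule Rᵐᵒᵖ R)) :
    rprod (A :: l) = rmul A (rprod l) := by
  cases l with
  | nil => exact (rmul_top A).symm
  | cons B t => rfl

theorem rprod_le_of_mem {l : List (Submodule Rᵐᵒᵖ R)}
    (hc : ∀ X ∈ l, ∀ Y ∈ l, rmul X Y = rmul Y X) {X : Submodule Rᵐᵒᵖ R} (hX : X ∈ l) :
    rprod l ≤ X := by
  induction l with
  | nil => cases hX
  | cons A t ih =>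
    rw [rprod_cons]
    rcases List.mem_cons.1 hX with rfl | hXt
    · exact rmul_le_left _ _
    · have ht := ih (fun Y hY Z hZ => hc Y (.tail _ hY) Z (.tail _ hZ)) hXt
      calc rmul A (rprod t) ≤ rmul A X := rmul_mono_right ht
        _ = rmul X A := hc A (.head _) X (.tail _ hXt)
        _ ≤ X := rmul_le_left _ _

theorem rmul_sup_eq_top {C D M : Submodule Rᵐᵒᵖ R} (hC : C ⊔ M = ⊤) (hD : D ⊔ M = ⊤) :
    rmul C D ⊔ M = ⊤ := by
  obtain ⟨c, hc, m, hm, hcm⟩ := Submodule.mem_sup.1 (hC ▸ Submodule.mem_top : (1 : R) ∈ C ⊔ M)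
  obtain ⟨d, hd, m', hm', hdm⟩ := Submodule.mem_sup.1 (hD ▸ Submodule.mem_top : (1 : R) ∈ D ⊔ M)
  have h1 : (1 : R) = c * d + (m * d + m') := by
    rw [← add_assoc, ← add_mul, hcm, one_mul, hdm]
  exact eq_top_of_one_mem (h1 ▸ add_mem (Submodule.mem_sup_left (mul_mem_rmul hc hd))
    (Submodule.mem_sup_right (add_mem (mul_mem_right M hm d) hm')))

theorem rprod_sup_eq_top {l : List (Submodule Rᵐᵒᵖ R)} {M : Submodule Rᵐᵒᵖ R}
    (h : ∀ X ∈ l, X ⊔ M = ⊤) : rprod l ⊔ M = ⊤ := by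
  induction l with
  | nil => exact top_sup_eq M
  | cons A t ih =>
    rw [rprod_cons]
    exact rmul_sup_eq_top (h A (.head _)) (ih fun X hX => h X (.tail _ hX))

theorem IsCoatom.exists_le_of_rprod_le {l : List (Submodule Rᵐᵒᵖ R)} {N : Submodule Rᵐᵒᵖ R}
    (hN : IsCoatom N) (h : rprod l ≤ N) : ∃ X ∈ l, X ≤ N := by
  by_contra! hl
  have hsup : rprod l ⊔ N = ⊤ :=
    rprod_sup_eq_top fun X hX => hN.2 _ (right_lt_sup.2 (hl X hX))
  exact hN.1 (sup_eq_right.2 h ▸ hsup)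

theorem Coindep.sup_eq_top {n : ℕ} {F : Fin n → Submodule Rᵐᵒᵖ R} (h : Coindep F) {i j : Fin n}
    (hji : j ≠ i) : F i ⊔ F j = ⊤ :=
  top_unique (h i ▸ sup_le_sup_left ((iInf_le _ j).trans (iInf_le _ hji)) _)

theorem isTwoSidedRid_of_sup_eq_top {A B : Submodule Rᵐᵒᵖ R} (h : A ⊔ B = ⊤)
    (hBA : rmul B A ≤ A) : IsTwoSidedRid A := by
  intro r x hx
  obtain ⟨a, ha, b, hb, rfl⟩ := Submodule.mem_sup.1 (h ▸ Submodule.mem_top : r ∈ A ⊔ B)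
  rw [add_mul]
  exact add_mem (mul_mem_right A ha x) (hBA (mul_mem_rmul hb hx))

section LargestProper

variable {F M : Submodule Rᵐᵒᵖ R} (hmax : ∀ X, F ≤ X → X ≠ ⊤ → X ≤ M)
include hmax

theorem exists_right_inverse_mod_of_notMem {y : R} (hy : y ∉ M) : ∃ s, 1 - y * s ∈ F := by
  have htop : rspan y ⊔ F = ⊤ := by
    by_contra h
    exact hy (hmax _ le_sup_right h (Submodule.mem_sup_left (Submodule.mem_span_singleton_self y)))
  obtain ⟨u, hu, a, ha, hua⟩ := Submodule.mem_sup.1 (htop ▸ Submodule.mem_top : (1 : R) ∈ _ ⊔ F)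
  obtain ⟨c, rfl⟩ := Submodule.mem_span_singleton.1 hu
  exact ⟨c.unop, by rwa [← hua, smul_eq_mul_unop, add_sub_cancel_left]⟩

theorem mem_of_mul_self_sub_mem (hF : IsTwoSidedRid F) (hM : M ≠ ⊤) {t : R} (ht : t ∈ M)
    (hidem : t * t - t ∈ F) : t ∈ F := by
  have h1t : 1 - t ∉ M := fun h => hM (eq_top_of_one_mem (by simpa using add_mem h ht))
  obtain ⟨v, hv⟩ := exists_right_inverse_mod_of_notMem hmax h1t
  have e : t = t * (1 - (1 - t) * v) - (t * t - t) * v := by noncomm_ring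
  exact e ▸ sub_mem (hF t _ hv) (mul_mem_right F hidem v)

theorem IsTwoSidedRid.of_forall_le (hF : IsTwoSidedRid F) (hM : IsCoatom M) (hFM : F ≤ M) :
    IsTwoSidedRid M := by
  intro r x hx
  by_contra hrx
  -- `rxs ≡ 1` makes `xsr ∈ M` idempotent mod `F`, so `xsr ∈ F` and `1 ≡ (rxs)² = r(xsr)xs ≡ 0`.
  obtain ⟨s, hs⟩ := exists_right_inverse_mod_of_notMem hmax hrx
  have hidem : x * s * r * (x * s * r) - x * s * r = -(x * s * ((1 - r * x * s) * r)) := by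
    noncomm_ring
  have ht : x * s * r ∈ F := mem_of_mul_self_sub_mem hmax hF hM.1
    (mul_mem_right M (mul_mem_right M hx s) r) (hidem ▸ F.neg_mem (hF _ _ (mul_mem_right F hs r)))
  have e : (1 : R) = (1 - r * x * s) + r * x * s * (1 - r * x * s) + r * (x * s * r) * (x * s) := by
    noncomm_ring
  have h1 : (1 : R) ∈ F := e ▸ add_mem (add_mem hs (hF _ _ hs)) (mul_mem_right F (hF r _ ht) _)
  exact hM.1 (top_unique (eq_top_of_one_mem h1 ▸ hFM))

end LargestProper

namespace IsTwoSidedRid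

variable {M : Submodule Rᵐᵒᵖ R}

def toLeftIdeal (hM : IsTwoSidedRid M) : Submodule R R where
  carrier := M
  add_mem' := add_mem
  zero_mem' := M.zero_mem
  smul_mem' c x hx := hM c x hx

theorem exists_left_inverse_mod_of_notMem (hM : IsTwoSidedRid M) (hco : IsCoatom M) {y : R}
    (hy : y ∉ M) : ∃ s, 1 - s * y ∈ M := by
  have hmax : ∀ X, M ≤ X → X ≠ ⊤ → X ≤ M := fun X hMX hX => ((hco.le_iff.1 hMX).resolve_left hX).le
  obtain ⟨s, hs⟩ := exists_right_inverse_mod_of_notMem hmax hy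
  have hsM : s ∉ M := fun h => hco.1 (eq_top_of_one_mem (by simpa using add_mem hs (hM y s h)))
  obtain ⟨u, hu⟩ := exists_right_inverse_mod_of_notMem hmax hsM
  have e : 1 - s * y = (1 - s * u) - s * (y * (1 - s * u)) + s * ((1 - y * s) * u) := by
    noncomm_ring
  exact ⟨s, e ▸ add_mem (sub_mem hu (hM s _ (hM y _ hu))) (hM s _ (mul_mem_right M hs u))⟩

theorem isCoatom_toLeftIdeal (hM : IsTwoSidedRid M) (hco : IsCoatom M) :
    IsCoatom hM.toLeftIdeal := by
  refine ⟨fun h => hco.1 (eq_top_of_one_mem (show (1 : R) ∈ hM.toLeftIdeal from h ▸ trivial)),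
    fun L hL => ?_⟩
  obtain ⟨y, hyL, hyM⟩ := SetLike.exists_of_lt hL
  obtain ⟨s, hs⟩ := hM.exists_left_inverse_mod_of_notMem hco hyM
  have h1 : (1 : R) ∈ L := by simpa using add_mem (hL.le hs) (L.smul_mem s hyL)
  exact (Ideal.eq_top_iff_one L).2 h1

end IsTwoSidedRid

end RightIdeals

theorem statement16_general {R : Type u} [Ring R] {n : ℕ}
    (A : Submodule Rᵐᵒᵖ R) (F : Fin n → Submodule Rᵐᵒᵖ R)
    (hsf : IsSerialFact A F) :
    ∃ M : Fin n → Submodule Rᵐᵒᵖ R,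
      (∀ i, IsCoatom (M i) ∧ F i ≤ M i ∧
        ∀ N : Submodule Rᵐᵒᵖ R, IsCoatom N → F i ≤ N → N = M i) ∧
      Function.Injective M ∧
      (∀ N : Submodule Rᵐᵒᵖ R, IsCoatom N → (A ≤ N ↔ ∃ i, N = M i)) ∧
      (2 ≤ n → ∀ i, IsTwoSidedRid (M i) ∧
        ∃ L : Submodule R R, (L : Set R) = (M i : Set R) ∧ IsCoatom L) := by
  obtain ⟨hne, hcomm, hcoind, huni, rfl⟩ := hsf
  choose M hM hFM using fun i => exists_isCoatom_ge (hne i)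
  have hchain i := isChain_Ici_of_isUniserialMod (huni i)
  have hcomm' : ∀ X ∈ List.ofFn F, ∀ Y ∈ List.ofFn F, rmul X Y = rmul Y X := by
    simpa only [List.forall_mem_ofFn_iff] using hcomm
  refine ⟨M, fun i => ⟨hM i, hFM i, fun N hN => (hchain i).eq_of_isCoatom (hM i) (hFM i) hN⟩,
    fun i j hij => ?_, fun N hN => ⟨fun hAN => ?_, ?_⟩, fun hn i => ?_⟩
  · by_contra hij'
    exact (hM i).1 <| top_unique <|
      hcoind.sup_eq_top (Ne.symm hij') ▸ sup_le (hFM i) ((hFM j).trans hij.ge)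
  · obtain ⟨_, hX, hXN⟩ := hN.exists_le_of_rprod_le hAN
    obtain ⟨i, rfl⟩ := List.mem_ofFn.1 hX
    exact ⟨i, (hchain i).eq_of_isCoatom (hM i) (hFM i) hN hXN⟩
  · rintro ⟨i, rfl⟩
    exact (rprod_le_of_mem hcomm' (List.mem_ofFn.2 ⟨i, rfl⟩)).trans (hFM i)
  · obtain ⟨j, hji⟩ : ∃ j, j ≠ i :=
      haveI := Fin.nontrivial_iff_two_le.2 hn; exists_ne i
    have hFi : IsTwoSidedRid (F i) := isTwoSidedRid_of_sup_eq_top (hcoind.sup_eq_top hji)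
      ((hcomm j i).trans_le (rmul_le_left _ _))
    have hMi := hFi.of_forall_le (fun X => (hchain i).le_of_isCoatom (hM i) (hFM i)) (hM i) (hFM i)
    exact ⟨hMi, hMi.toLeftIdeal, rfl, hMi.isCoatom_toLeftIdeal (hM i)⟩

/-- Proposition 3.10: if `A = A₁⋯Aₙ` is a serial factorization, then (1) each `Aᵢ` lies in a
unique maximal right ideal `Mᵢ`; (2) the `Mᵢ` are pairwise distinct and are exactly the
maximal right ideals containing `A`; (3) if `n ≥ 2`, each `Mᵢ` is two-sided and is a maximal
left ideal as well. -/
theorem statement16 {R : Type u} [Ring R] [Nontrivial R] {n : ℕ}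
    (A : Submodule Rᵐᵒᵖ R) (F : Fin n → Submodule Rᵐᵒᵖ R)
    (hsf : IsSerialFact A F) :
    ∃ M : Fin n → Submodule Rᵐᵒᵖ R,
      (∀ i, IsCoatom (M i) ∧ F i ≤ M i ∧
        ∀ N : Submodule Rᵐᵒᵖ R, IsCoatom N → F i ≤ N → N = M i) ∧
      Function.Injective M ∧
      (∀ N : Submodule Rᵐᵒᵖ R, IsCoatom N → (A ≤ N ↔ ∃ i, N = M i)) ∧
      (2 ≤ n → ∀ i, IsTwoSidedRid (M i) ∧
        ∃ L : Submodule R R, (L : Set R) = (M i : Set R) ∧ IsCoatom L) :=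
  statement16_general A F hsf
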